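/- The inductance map e, sending an admissible linear chain A = [a_1,...,a_r] to d(Ā)/d(A), is a bijection from the set of all admissible linear chains onto the set of rational numbers in the open interval (0,1). -/

import Mathlib

/-- The tridiagonal matrix of a linear chain: diagonal entries from the list,
entries `-1` on the first sub- and super-diagonals, `0` elsewhere. -/
def chainMatrix (l : List ℤ) : Matrix (Fin l.length) (Fin l.length) ℤ :=
  fun i j =>
    if i = j then l.get i
    else if (i : ℕ) + 1 = (j : ℕ) ∨ (j : ℕ) + 1 = (i : ℕ) then -1 else 0

/-- The discriminant of a linear chain. -/
def disc (l : List ℤ) : ℤ := (chainMatrix l).det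

/-- A linear chain is admissible if it is nonempty and all entries are ≥ 2. -/
def Admissible (l : List ℤ) : Prop := l ≠ [] ∧ ∀ a ∈ l, 2 ≤ a

/-- The inductance of a chain. -/
def ind (l : List ℤ) : ℚ := (disc l.tail : ℚ) / (disc l : ℚ)

/-! Expanding the determinant gives `d(a :: b :: t) = a d(b :: t) - d(t)`, so for admissible chains
`d` grows strictly along the chain and `e(a :: l)⁻¹ = a - e(l)` with `e(l) ∈ (0, 1)`. Hence the
first entry is recovered as `a = ⌈e(a :: l)⁻¹⌉`, and injectivity follows by induction. Conversely,
for `q ∈ (0, 1)` with `a = ⌈q⁻¹⌉`, either `q = 1 / a` or `a - q⁻¹ ∈ (0, 1)` has denominator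
`q.num < q.den`; this Hirzebruch–Jung continued fraction algorithm gives surjectivity. -/

lemma chainMatrix_submatrix_succ (a : ℤ) (l : List ℤ) :
    (chainMatrix (a :: l)).submatrix Fin.succ Fin.succ = chainMatrix l := by
  ext i j
  simp [chainMatrix, Fin.ext_iff]

lemma disc_nil : disc [] = 1 := Matrix.det_fin_zero

lemma disc_singleton (a : ℤ) : disc [a] = a := Matrix.det_fin_one _

-- Laplace expansion along the first row, whose only nonzero entries are `a` and `-1`; the minor
-- of the `-1` has first column `(-1, 0, …, 0)`, which is expanded once more.
lemma disc_cons_cons (a b : ℤ) (t : List ℤ) :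
    disc (a :: b :: t) = a * disc (b :: t) - disc t := by
  let M : Matrix (Fin (t.length + 2)) (Fin (t.length + 2)) ℤ := chainMatrix (a :: b :: t)
  have hminor : (M.submatrix Fin.succ (Fin.succ 0).succAbove).det = -disc t := by
    have hsub : (M.submatrix Fin.succ (Fin.succ 0).succAbove).submatrix Fin.succ Fin.succ =
        chainMatrix t := by
      rw [← chainMatrix_submatrix_succ b, ← chainMatrix_submatrix_succ a]
      ext i j
      simp [M]
    rw [Matrix.det_succ_column_zero, Fin.sum_univ_succ, Fin.succAbove_zero, hsub]
    simp [disc, M, chainMatrix, Fin.ext_iff]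
  change M.det = _
  rw [Matrix.det_succ_row_zero, Fin.sum_univ_succ, Fin.sum_univ_succ, Fin.succAbove_zero,
    chainMatrix_submatrix_succ, hminor]
  simp [M, disc, chainMatrix, Fin.ext_iff, sub_eq_add_neg]

lemma admissible_cons_iff {a : ℤ} {l : List ℤ} :
    Admissible (a :: l) ↔ 2 ≤ a ∧ ∀ x ∈ l, 2 ≤ x := by
  simp [Admissible]

lemma Admissible.of_cons {a : ℤ} {l : List ℤ} (h : Admissible (a :: l)) (hl : l ≠ []) :
    Admissible l :=
  ⟨hl, (admissible_cons_iff.1 h).2⟩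

lemma disc_pos_and_lt_disc_cons {a : ℤ} {l : List ℤ} (ha : 2 ≤ a) (hl : ∀ x ∈ l, 2 ≤ x) :
    0 < disc l ∧ disc l < disc (a :: l) := by
  induction l generalizing a with
  | nil => simp only [disc_nil, disc_singleton]; omega
  | cons b t ih =>
    rw [List.forall_mem_cons] at hl
    obtain ⟨ht, htb⟩ := ih hl.1 hl.2
    rw [disc_cons_cons]
    constructor <;> nlinarith

lemma disc_pos {l : List ℤ} (hl : Admissible l) : 0 < disc l := by
  obtain ⟨a, t, rfl⟩ := List.exists_cons_of_ne_nil hl.1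
  rw [admissible_cons_iff] at hl
  obtain ⟨ht, hlt⟩ := disc_pos_and_lt_disc_cons hl.1 hl.2
  exact ht.trans hlt

lemma ind_mem_Ioo {l : List ℤ} (hl : Admissible l) : ind l ∈ Set.Ioo 0 1 := by
  obtain ⟨a, t, rfl⟩ := List.exists_cons_of_ne_nil hl.1
  rw [admissible_cons_iff] at hl
  obtain ⟨ht, hlt⟩ := disc_pos_and_lt_disc_cons hl.1 hl.2
  have hpos : (0 : ℚ) < disc (a :: t) := by exact_mod_cast ht.trans hlt
  exact ⟨div_pos (by exact_mod_cast ht) hpos, (div_lt_one hpos).2 (by exact_mod_cast hlt)⟩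

lemma inv_ind_singleton (a : ℤ) : (ind [a])⁻¹ = a := by
  simp [ind, disc_nil, disc_singleton]

lemma inv_ind_cons (a : ℤ) {l : List ℤ} (hl : Admissible l) : (ind (a :: l))⁻¹ = a - ind l := by
  obtain ⟨b, t, rfl⟩ := List.exists_cons_of_ne_nil hl.1
  have hb : (disc (b :: t) : ℚ) ≠ 0 := by exact_mod_cast (disc_pos hl).ne'
  rw [ind, ind, List.tail_cons, List.tail_cons, inv_div, disc_cons_cons]
  push_cast
  field_simp

lemma ind_singleton_ne_ind_cons (a : ℤ) {l : List ℤ} (hl : Admissible l) :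
    ind [a] ≠ ind (a :: l) := by
  intro h
  have := congrArg (·⁻¹) h
  simp only [inv_ind_singleton, inv_ind_cons a hl] at this
  linarith [(ind_mem_Ioo hl).1]

lemma ceil_inv_ind {a : ℤ} {l : List ℤ} (h : Admissible (a :: l)) : ⌈(ind (a :: l))⁻¹⌉ = a := by
  rcases eq_or_ne l [] with rfl | hl
  · rw [inv_ind_singleton, Int.ceil_intCast]
  · have hl := h.of_cons hl
    obtain ⟨h₀, h₁⟩ := ind_mem_Ioo hl
    rw [inv_ind_cons a hl, Int.ceil_eq_iff]
    constructor <;> linarith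

lemma ind_injOn : Set.InjOn ind {l | Admissible l} := by
  intro l₁ h₁ l₂ h₂ heq
  induction l₁ generalizing l₂ with
  | nil => exact absurd rfl h₁.1
  | cons a t₁ ih =>
    obtain ⟨b, t₂, rfl⟩ := List.exists_cons_of_ne_nil h₂.1
    obtain rfl : a = b := by rw [← ceil_inv_ind h₁, heq, ceil_inv_ind h₂]
    congr 1
    rcases eq_or_ne t₁ [] with rfl | ht₁ <;> rcases eq_or_ne t₂ [] with rfl | ht₂
    · rfl
    · exact absurd heq (ind_singleton_ne_ind_cons a (h₂.of_cons ht₂))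
    · exact absurd heq.symm (ind_singleton_ne_ind_cons a (h₁.of_cons ht₁))
    · have := congrArg (·⁻¹) heq
      simp only [inv_ind_cons a (h₁.of_cons ht₁), inv_ind_cons a (h₂.of_cons ht₂)] at this
      exact ih (h₁.of_cons ht₁) (h₂.of_cons ht₂) (by linarith)

lemma den_intCast_sub_inv_lt {q : ℚ} (hq : q ∈ Set.Ioo 0 1) (a : ℤ) : (a - q⁻¹).den < q.den := by
  rw [Rat.intCast_sub_den, Rat.den_inv_of_ne_zero hq.1.ne']
  have := Rat.num_lt_denom_iff.2 hq.2
  have := Rat.num_pos.2 hq.1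
  omega

lemma exists_admissible_ind_eq (q : ℚ) (hq : q ∈ Set.Ioo 0 1) :
    ∃ l, Admissible l ∧ ind l = q := by
  induction h : q.den using Nat.strong_induction_on generalizing q with
  | _ n ih =>
  set a := ⌈q⁻¹⌉
  have ha : 2 ≤ a := by
    have : (1 : ℤ) < a := Int.lt_ceil.2 (by exact_mod_cast (one_lt_inv₀ hq.1).2 hq.2)
    omega
  by_cases hint : (a : ℚ) = q⁻¹
  · refine ⟨[a], by simp [admissible_cons_iff, ha], inv_injective ?_⟩
    rw [inv_ind_singleton, hint]
  · have hr : (a : ℚ) - q⁻¹ ∈ Set.Ioo 0 1 :=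
      ⟨sub_pos.2 ((Int.le_ceil _).lt_of_ne' hint), by linarith [Int.ceil_lt_add_one q⁻¹]⟩
    obtain ⟨l, hl, hind⟩ := ih _ (h ▸ den_intCast_sub_inv_lt hq a) _ hr rfl
    refine ⟨a :: l, admissible_cons_iff.2 ⟨ha, hl.2⟩, inv_injective ?_⟩
    rw [inv_ind_cons a hl, hind, sub_sub_cancel]

theorem ind_bijOn :
    Set.BijOn ind {l : List ℤ | Admissible l} {q : ℚ | 0 < q ∧ q < 1} :=
  ⟨fun _ hl => ind_mem_Ioo hl, ind_injOn, exists_admissible_ind_eq⟩
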